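/- Let n ≥ 1, ρ > 0, and let u be a C² function on the closed Euclidean ball of radius ρ centered at the origin in ℝⁿ, with u ≥ 0 and Δu ≥ (2/n)·u² on the ball. Then there exists a constant C > 0 depending only on n such that u(x) ≤ C·ρ²/(ρ² − |x|²)² for every x with |x| < ρ. -/

import Mathlib

/-!
The function `F = (ρ² - ‖y‖²)² u` vanishes on the boundary sphere, so its maximum over the closed
ball is either `0` or attained at an interior point `x₀`. Put `W = ρ² - ‖x₀‖²`. Along a line
`t ↦ x₀ + t v` with `‖v‖ = 1`, `F` is `b(t)² u(x₀ + t v)` with `b(t) = W - 2⟪x₀, v⟫t - t²`;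
the first-order condition eliminates the first derivative of `u` from the second-order one,
leaving `W² ∂ᵥ²u(x₀) ≤ (24⟪x₀, v⟫² + 4W) u(x₀)`. Summing over the coordinate directions gives
`W² Δu(x₀) ≤ (24 + 4n) ρ² u(x₀)`, and `Δu ≥ (2/n) u²` turns this into
`F(x₀) = W² u(x₀) ≤ (2n² + 12n) ρ²`.
-/

open Filter Topology Metric

/-- The Euclidean Laplacian of `u : ℝⁿ → ℝ`, i.e. the trace of the Hessian. -/
noncomputable def laplacian {n : ℕ} (u : EuclideanSpace ℝ (Fin n) → ℝ)
    (x : EuclideanSpace ℝ (Fin n)) : ℝ :=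
  ∑ i : Fin n,
    fderiv ℝ (fun y => fderiv ℝ u y (EuclideanSpace.single i 1)) x
      (EuclideanSpace.single i 1)

theorem IsLocalMax.deriv_deriv_nonpos {f : ℝ → ℝ} {a : ℝ} (hmax : IsLocalMax f a)
    (hf : ContinuousAt f a) : deriv (deriv f) a ≤ 0 := by
  by_contra! hpos
  have hmin := isLocalMin_of_deriv_deriv_pos hpos hmax.deriv_eq_zero hf
  have hconst : f =ᶠ[𝓝 a] fun _ => f a := (hmax.and hmin).mono fun _ h => le_antisymm h.1 h.2
  have hderiv : deriv f =ᶠ[𝓝 a] fun _ => 0 := by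
    filter_upwards [hconst.eventuallyEq_nhds] with t ht
    rw [ht.deriv_eq, deriv_const]
  rw [hderiv.deriv_eq, deriv_const] at hpos
  exact hpos.false

theorem IsLocalMax.mul_deriv_deriv_le {h g : ℝ → ℝ} {a : ℝ} (hmax : IsLocalMax (h * g) a)
    (hh : ContDiffAt ℝ 2 h a) (hg : ContDiffAt ℝ 2 g a) (ha : 0 < h a) :
    h a ^ 2 * deriv (deriv g) a ≤ (2 * deriv h a ^ 2 - h a * deriv (deriv h) a) * g a := by
  have leibniz₁ : deriv (h * g) a = h a * deriv g a + deriv h a * g a := by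
    simpa [iteratedDeriv_succ, Finset.sum_range_succ] using
      iteratedDeriv_mul (n := 1) (hh.of_le one_le_two) (hg.of_le one_le_two)
  have leibniz₂ : deriv (deriv (h * g)) a =
      h a * deriv (deriv g) a + 2 * deriv h a * deriv g a + deriv (deriv h) a * g a := by
    simpa [iteratedDeriv_succ, Finset.sum_range_succ] using iteratedDeriv_mul (n := 2) hh hg
  have first := leibniz₁ ▸ hmax.deriv_eq_zero
  have second := leibniz₂ ▸ hmax.deriv_deriv_nonpos (hh.continuousAt.mul hg.continuousAt)
  nlinarith [mul_nonpos_of_nonneg_of_nonpos ha.le second, congrArg (2 * deriv h a * ·) first]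

section Line

variable {E F : Type*} [NormedAddCommGroup E] [NormedSpace ℝ E]
  [NormedAddCommGroup F] [NormedSpace ℝ F]

theorem hasDerivAt_add_smul (x v : E) (t : ℝ) : HasDerivAt (fun s : ℝ => x + s • v) v t := by
  simpa using ((hasDerivAt_id t).smul_const v).const_add x

theorem ContDiffAt.comp_add_smul {k : WithTop ℕ∞} {u : E → F} {x : E} (v : E)
    (hu : ContDiffAt ℝ k u x) : ContDiffAt ℝ k (fun t : ℝ => u (x + t • v)) 0 :=
  ContDiffAt.comp (g := u) (0 : ℝ) (by simpa using hu) (by fun_prop)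

theorem ContDiffAt.deriv_deriv_comp_add_smul {u : E → F} {x : E} (v : E)
    (hu : ContDiffAt ℝ 2 u x) :
    deriv (deriv fun t : ℝ => u (x + t • v)) 0 = fderiv ℝ (fun y => fderiv ℝ u y v) x v := by
  have hline : Tendsto (fun t : ℝ => x + t • v) (𝓝 0) (𝓝 x) :=
    Continuous.tendsto' (by fun_prop) 0 x (by simp)
  have hderiv : deriv (fun t : ℝ => u (x + t • v)) =ᶠ[𝓝 0] fun t => fderiv ℝ u (x + t • v) v := by
    filter_upwards [hline.eventually (hu.eventually (by simp))] with t ht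
    exact ((ht.differentiableAt two_ne_zero).hasFDerivAt.comp_hasDerivAt t
      (hasDerivAt_add_smul x v t)).deriv
  have hdiff : DifferentiableAt ℝ (fun y => fderiv ℝ u y v) x :=
    ((hu.fderiv_right (m := 1) (by norm_num)).differentiableAt one_ne_zero).clm_apply
      (differentiableAt_const v)
  rw [hderiv.deriv_eq]
  exact (hdiff.hasFDerivAt.comp_hasDerivAt_of_eq 0 (hasDerivAt_add_smul x v 0) (by simp)).deriv

end Line

theorem IsLocalMax.weighted_fderiv_fderiv_le {E : Type*} [NormedAddCommGroup E]
    [InnerProductSpace ℝ E] {u : E → ℝ} {x v : E} {ρ : ℝ}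
    (hmax : IsLocalMax (fun y => (ρ ^ 2 - ‖y‖ ^ 2) ^ 2 * u y) x) (hu : ContDiffAt ℝ 2 u x)
    (hv : ‖v‖ = 1) (hx : ‖x‖ < ρ) :
    (ρ ^ 2 - ‖x‖ ^ 2) ^ 2 * fderiv ℝ (fun y => fderiv ℝ u y v) x v ≤
      (24 * inner ℝ x v ^ 2 + 4 * (ρ ^ 2 - ‖x‖ ^ 2)) * u x := by
  set W := ρ ^ 2 - ‖x‖ ^ 2
  set p := inner ℝ x v
  have hW : 0 < W := by nlinarith [norm_nonneg x]
  have hnorm (t : ℝ) : ρ ^ 2 - ‖x + t • v‖ ^ 2 = W - 2 * p * t - t ^ 2 := by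
    rw [norm_add_sq_real, real_inner_smul_right, norm_smul, hv, Real.norm_eq_abs, mul_one, sq_abs]
    ring
  set b : ℝ → ℝ := fun t => W - 2 * p * t - t ^ 2
  have hb (t : ℝ) : HasDerivAt b (-2 * (p + t)) t := by
    refine ((((hasDerivAt_id t).const_mul (2 * p)).const_sub W).sub
      (hasDerivAt_pow 2 t)).congr_deriv ?_
    simp only [mul_one, Nat.cast_ofNat, Nat.add_one_sub_one, pow_one]
    ring
  have hline : IsLocalMax ((fun t => b t ^ 2) * fun t => u (x + t • v)) 0 := by
    have hcomp : IsLocalMax ((fun y => (ρ ^ 2 - ‖y‖ ^ 2) ^ 2 * u y) ∘ fun t : ℝ => x + t • v) 0 :=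
      IsLocalMax.comp_continuous (by simpa using hmax) (by fun_prop)
    simp only [Function.comp_def, hnorm] at hcomp
    exact hcomp
  have hderiv : deriv (fun t => b t ^ 2) = fun t => 2 * b t * (-2 * (p + t)) :=
    funext fun t => ((hb t).pow 2).deriv.trans (by push_cast; ring)
  have hderiv₂ : HasDerivAt (fun t => 2 * b t * (-2 * (p + t))) (8 * p ^ 2 - 4 * W) 0 := by
    refine (((hb 0).const_mul 2).mul
      (((hasDerivAt_id (0 : ℝ)).const_add p).const_mul (-2))).congr_deriv ?_
    simp only [b, id_eq]
    ring
  have key := hline.mul_deriv_deriv_le (by fun_prop) (hu.comp_add_smul v)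
    (pow_pos (by simpa [b] using hW) 2)
  rw [hu.deriv_deriv_comp_add_smul v, hderiv, hderiv₂.deriv] at key
  simp only [b, mul_zero, sub_zero, ne_eq, OfNat.ofNat_ne_zero, not_false_eq_true, zero_pow,
    add_zero, zero_smul] at key
  refine le_of_mul_le_mul_left ?_ (by positivity : 0 < W ^ 2)
  linear_combination key

section Ball

variable {n : ℕ} {u : EuclideanSpace ℝ (Fin n) → ℝ} {x : EuclideanSpace ℝ (Fin n)} {ρ : ℝ}

theorem IsLocalMax.weighted_laplacian_le
    (hmax : IsLocalMax (fun y => (ρ ^ 2 - ‖y‖ ^ 2) ^ 2 * u y) x) (hu : ContDiffAt ℝ 2 u x)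
    (hx : ‖x‖ < ρ) :
    (ρ ^ 2 - ‖x‖ ^ 2) ^ 2 * laplacian u x ≤
      (24 * ‖x‖ ^ 2 + 4 * n * (ρ ^ 2 - ‖x‖ ^ 2)) * u x := by
  calc (ρ ^ 2 - ‖x‖ ^ 2) ^ 2 * laplacian u x
      ≤ ∑ i : Fin n, (24 * x i ^ 2 + 4 * (ρ ^ 2 - ‖x‖ ^ 2)) * u x := by
        rw [laplacian, Finset.mul_sum]
        refine Finset.sum_le_sum fun i _ => ?_
        simpa [EuclideanSpace.inner_single_right] using
          hmax.weighted_fderiv_fderiv_le hu (by simp) hx (v := EuclideanSpace.single i 1)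
    _ = (24 * ‖x‖ ^ 2 + 4 * n * (ρ ^ 2 - ‖x‖ ^ 2)) * u x := by
        rw [← Finset.sum_mul, Finset.sum_add_distrib, ← Finset.mul_sum,
          ← EuclideanSpace.real_norm_sq_eq, Finset.sum_const, Finset.card_univ, Fintype.card_fin,
          nsmul_eq_mul]
        ring

theorem IsLocalMax.weighted_le_of_laplacian_ge (hn : 1 ≤ n)
    (hmax : IsLocalMax (fun y => (ρ ^ 2 - ‖y‖ ^ 2) ^ 2 * u y) x) (hu : ContDiffAt ℝ 2 u x)
    (hx : ‖x‖ < ρ) (hux : 0 ≤ u x) (hlap : 2 / (n : ℝ) * u x ^ 2 ≤ laplacian u x) :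
    (ρ ^ 2 - ‖x‖ ^ 2) ^ 2 * u x ≤ (2 * n ^ 2 + 12 * n) * ρ ^ 2 := by
  have hN : (0 : ℝ) < n := by exact_mod_cast hn
  have hupper := hmax.weighted_laplacian_le hu hx
  have hlower := mul_le_mul_of_nonneg_left hlap (sq_nonneg (ρ ^ 2 - ‖x‖ ^ 2))
  set W := ρ ^ 2 - ‖x‖ ^ 2
  have hW : 0 < W := by nlinarith [norm_nonneg x]
  have hWρ : W ≤ ρ ^ 2 := by nlinarith [norm_nonneg x]
  have hbound : 2 * (W ^ 2 * u x * u x) ≤ n * ((24 + 4 * n) * ρ ^ 2 * u x) := by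
    rw [← div_le_iff₀' hN]
    calc 2 * (W ^ 2 * u x * u x) / n = W ^ 2 * (2 / n * u x ^ 2) := by ring
      _ ≤ (24 * ‖x‖ ^ 2 + 4 * n * W) * u x := hlower.trans hupper
      _ ≤ (24 + 4 * n) * ρ ^ 2 * u x := by gcongr; nlinarith
  rcases hux.eq_or_lt with hu0 | hupos
  · rw [← hu0, mul_zero]; positivity
  · exact le_of_mul_le_mul_right (by nlinarith) hupos

end Ball

/-- For `n ≥ 1` there is a constant `C > 0` depending only on `n` such that:
for every `ρ > 0` and every C² function `u ≥ 0` on the closed ball of radius `ρ`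
centered at the origin of `ℝⁿ` satisfying `Δu ≥ (2/n)·u²` on the ball, one has
`u(x) ≤ C·ρ²/(ρ² − |x|²)²` for all `x` with `|x| < ρ`. -/
theorem decay_estimate_on_ball
    {n : ℕ} (hn : 1 ≤ n) :
    ∃ C : ℝ, 0 < C ∧ ∀ ρ : ℝ, 0 < ρ →
      ∀ u : EuclideanSpace ℝ (Fin n) → ℝ,
        ContDiffOn ℝ 2 u (Metric.closedBall 0 ρ) →
        (∀ x ∈ Metric.closedBall (0 : EuclideanSpace ℝ (Fin n)) ρ, 0 ≤ u x) →
        (∀ x ∈ Metric.closedBall (0 : EuclideanSpace ℝ (Fin n)) ρ,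
          laplacian u x ≥ (2 / (n : ℝ)) * (u x) ^ 2) →
        ∀ x : EuclideanSpace ℝ (Fin n), ‖x‖ < ρ →
          u x ≤ C * ρ ^ 2 / (ρ ^ 2 - ‖x‖ ^ 2) ^ 2 := by
  have hN : (0 : ℝ) < n := by exact_mod_cast hn
  refine ⟨2 * n ^ 2 + 12 * n, by positivity, fun ρ hρ u hu hu₀ hlap x hx => ?_⟩
  obtain ⟨x₀, hx₀, hmax⟩ := (isCompact_closedBall 0 ρ).exists_isMaxOn
    (nonempty_closedBall.2 hρ.le)
    ((by fun_prop : Continuous fun y : EuclideanSpace ℝ (Fin n) => (ρ ^ 2 - ‖y‖ ^ 2) ^ 2)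
      |>.continuousOn.mul hu.continuousOn)
  have hmax_le : (ρ ^ 2 - ‖x₀‖ ^ 2) ^ 2 * u x₀ ≤ (2 * n ^ 2 + 12 * n) * ρ ^ 2 := by
    rcases (mem_closedBall_zero_iff.1 hx₀).lt_or_eq with hlt | hρx₀
    · have hnhds : closedBall 0 ρ ∈ 𝓝 x₀ := closedBall_mem_nhds_of_mem (mem_ball_zero_iff.2 hlt)
      exact (hmax.isLocalMax hnhds).weighted_le_of_laplacian_ge hn (hu.contDiffAt hnhds) hlt
        (hu₀ x₀ hx₀) (hlap x₀ hx₀)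
    · rw [hρx₀, sub_self, zero_pow two_ne_zero, zero_mul]
      positivity
  have hW : 0 < ρ ^ 2 - ‖x‖ ^ 2 := by nlinarith [norm_nonneg x]
  rw [le_div_iff₀ (by positivity), mul_comm]
  exact (hmax (mem_closedBall_zero_iff.2 hx.le)).trans hmax_le
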